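/- arXiv:2505.09088 — 3 statements merged into one kernel-verified Lean document; each statement's English description precedes it below -/
import Mathlib

section
/- If f : ℝⁿ → ℝ is continuously differentiable with L-Lipschitz gradient, p is a descent direction at x (⟨∇f(x), p⟩ < 0), and f is bounded below along the ray {x + αp : α > 0}, then there exists an interval of step lengths α > 0 satisfying both Wolfe conditions with constants 0 < c₁ < c₂ < 1 (existence of Wolfe step lengths). -/
open scoped RealInnerProductSpace

open Set Filter Topology

/-- Existence of step lengths satisfying the Wolfe conditions. -/
theorem exists_wolfe_interval {n : ℕ} (f : EuclideanSpace ℝ (Fin n) → ℝ)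
    (g : EuclideanSpace ℝ (Fin n) → EuclideanSpace ℝ (Fin n))
    (hf : ContDiff ℝ 1 f)
    (hgrad : ∀ y, HasGradientAt f (g y) y)
    (L : NNReal) (hLip : LipschitzWith L g)
    (x p : EuclideanSpace ℝ (Fin n))
    (hdesc : ⟪g x, p⟫ < 0)
    (hbdd : ∃ m : ℝ, ∀ α : ℝ, 0 < α → m ≤ f (x + α • p))
    (c₁ c₂ : ℝ) (hc₁ : 0 < c₁) (hc₁₂ : c₁ < c₂) (hc₂ : c₂ < 1) :
    ∃ α₁ α₂ : ℝ, 0 < α₁ ∧ α₁ < α₂ ∧ ∀ α ∈ Set.Icc α₁ α₂,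
      f (x + α • p) ≤ f x + c₁ * α * ⟪g x, p⟫ ∧
      ⟪g (x + α • p), p⟫ ≥ c₂ * ⟪g x, p⟫ := by
  obtain ⟨m, hm⟩ := hbdd
  set d : ℝ := ⟪g x, p⟫ with hd
  have hd0 : d < 0 := hdesc
  -- the line α ↦ x + α • p
  have hcurve : ∀ α : ℝ, HasDerivAt (fun α : ℝ => x + α • p) p α := by
    intro α
    simpa using ((hasDerivAt_id α).smul_const p).const_add x
  set φ : ℝ → ℝ := fun α => f (x + α • p) with hφdef
  set ψ : ℝ → ℝ := fun α => ⟪g (x + α • p), p⟫ with hψdef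
  have hφ' : ∀ α : ℝ, HasDerivAt φ (ψ α) α := by
    intro α
    have h1 := ((hgrad (x + α • p)).hasFDerivAt).comp_hasDerivAt α (hcurve α)
    simp only [InnerProductSpace.toDual_apply_apply] at h1
    exact h1
  have hψc : Continuous ψ := by
    exact Continuous.inner (hLip.continuous.comp (by continuity)) continuous_const
  have hψ0 : ψ 0 = d := by simp [ψ, d]
  set h : ℝ → ℝ := fun α => φ α - (f x + c₁ * α * d) with hhdef
  have hh' : ∀ α, HasDerivAt h (ψ α - c₁ * d) α := by
    intro α
    have hline : HasDerivAt (fun α : ℝ => f x + c₁ * α * d) (c₁ * d) α := by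
      simpa using (((hasDerivAt_id α).const_mul c₁).mul_const d).const_add (f x)
    exact (hφ' α).sub hline
  have hhc : Continuous h := by
    refine continuous_iff_continuousAt.2 fun α => (hh' α).continuousAt
  have hh0 : h 0 = 0 := by simp [h, φ]
  -- h is negative just right of 0
  have hslope : Tendsto (slope h 0) (𝓝[≠] 0) (𝓝 (ψ 0 - c₁ * d)) :=
    hasDerivAt_iff_tendsto_slope.1 (hh' 0)
  have hneg : ψ 0 - c₁ * d < 0 := by
    rw [hψ0]; nlinarith
  have hev : ∀ᶠ α in 𝓝[>] (0:ℝ), h α < 0 := by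
    have h1 : ∀ᶠ α in 𝓝[≠] (0:ℝ), slope h 0 α < 0 :=
      hslope.eventually (Filter.Tendsto.eventually_lt_const hneg tendsto_id)
    have h2 : ∀ᶠ α in 𝓝[>] (0:ℝ), slope h 0 α < 0 :=
      h1.filter_mono (nhdsWithin_mono 0 fun a ha => ne_of_gt ha)
    filter_upwards [h2, self_mem_nhdsWithin] with α hα hα0
    have hα0' : (0:ℝ) < α := hα0
    have hsl : α⁻¹ * h α < 0 := by simpa [slope, hh0] using hα
    have := mul_neg_of_pos_of_neg hα0' hsl
    rwa [mul_inv_cancel_left₀ (ne_of_gt hα0')] at this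
  obtain ⟨ε, hεmem, hεsub⟩ := mem_nhdsGT_iff_exists_Ioo_subset.1 hev
  have hε : (0:ℝ) < ε := hεmem
  have hIoo : ∀ α ∈ Ioo (0:ℝ) ε, h α < 0 := fun α hα => hεsub hα
  -- the set of crossing points
  set T : Set ℝ := {α | ε ≤ α ∧ 0 ≤ h α} with hTdef
  have hc₁d : c₁ * d < 0 := mul_neg_of_pos_of_neg hc₁ hd0
  have hTne : T.Nonempty := by
    refine ⟨max ε ((m - f x) / (c₁ * d)), le_max_left _ _, ?_⟩
    set A := max ε ((m - f x) / (c₁ * d)) with hA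
    have hApos : 0 < A := lt_of_lt_of_le hε (le_max_left _ _)
    have h1 : (m - f x) / (c₁ * d) ≤ A := le_max_right _ _
    have h2 : A * (c₁ * d) ≤ m - f x := (div_le_iff_of_neg hc₁d).1 h1
    have h3 : m ≤ φ A := hm A hApos
    simp only [h, hhdef]
    nlinarith
  have hTbdd : BddBelow T := ⟨ε, fun a ha => ha.1⟩
  have hTclosed : IsClosed T :=
    (isClosed_le continuous_const continuous_id).inter
      (isClosed_le continuous_const hhc)
  set β := sInf T with hβdef
  have hβT : β ∈ T := hTclosed.csInf_mem hTne hTbdd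
  have hβε : ε ≤ β := hβT.1
  have hβpos : 0 < β := lt_of_lt_of_le hε hβε
  -- everything strictly between 0 and β has h < 0
  have hbelow : ∀ α ∈ Ioo (0:ℝ) β, h α < 0 := by
    intro α hα
    by_cases hcase : α < ε
    · exact hIoo α ⟨hα.1, hcase⟩
    · by_contra hcon
      push_neg at hcon
      have : α ∈ T := ⟨not_lt.1 hcase, hcon⟩
      exact absurd (csInf_le hTbdd this) (not_le.2 hα.2)
  have hβle : h β ≤ 0 := by
    have htend : Tendsto h (𝓝[<] β) (𝓝 (h β)) :=
      (hhc.continuousAt).continuousWithinAt.tendsto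
    refine le_of_tendsto htend ?_
    filter_upwards [Ioo_mem_nhdsLT_of_mem ⟨hβpos, le_refl β⟩] with α hα
    exact (hbelow α hα).le
  have hβ0 : h β = 0 := le_antisymm hβle hβT.2
  -- mean value theorem
  obtain ⟨γ, hγmem, hγ⟩ := exists_hasDerivAt_eq_slope h (fun α => ψ α - c₁ * d)
    hβpos (hhc.continuousOn) (fun α _ => hh' α)
  have hψγ : ψ γ = c₁ * d := by
    have : ψ γ - c₁ * d = 0 := by
      rw [hγ, hβ0, hh0]; simp
    linarith
  have hγh : h γ < 0 := hbelow γ hγmem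
  have hγψ : c₂ * d < ψ γ := by
    rw [hψγ]
    exact mul_lt_mul_of_neg_right hc₁₂ hd0
  -- open neighbourhood where both strict inequalities hold
  set U : Set ℝ := {α | h α < 0} ∩ {α | c₂ * d < ψ α} with hUdef
  have hUopen : IsOpen U :=
    (isOpen_lt hhc continuous_const).inter (isOpen_lt continuous_const hψc)
  have hγU : γ ∈ U := ⟨hγh, hγψ⟩
  obtain ⟨δ, hδpos, hδball⟩ := Metric.isOpen_iff.1 hUopen γ hγU
  have hγpos : 0 < γ := hγmem.1
  set r := min (δ / 2) (γ / 2) with hr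
  have hrpos : 0 < r := lt_min (by linarith) (by linarith)
  refine ⟨γ - r, γ + r, by
    have : r ≤ γ / 2 := min_le_right _ _
    linarith, by linarith, ?_⟩
  intro α hα
  have hαU : α ∈ U := by
    apply hδball
    have h1 : γ - r ≤ α := hα.1
    have h2 : α ≤ γ + r := hα.2
    have : |α - γ| ≤ r := abs_le.2 ⟨by linarith, by linarith⟩
    have hrδ : r ≤ δ / 2 := min_le_left _ _
    simpa [Real.dist_eq] using lt_of_le_of_lt this (by linarith)
  refine ⟨?_, le_of_lt hαU.2⟩
  have := hαU.1
  simp only [h, hhdef, φ, hφdef, Set.mem_setOf_eq] at this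
  linarith
end

section
/- For gradient descent x_{k+1} = x_k - (1/L)∇f(x_k) applied to a function f : ℝⁿ → ℝ that is convex, differentiable with L-Lipschitz gradient, and has a minimizer x*, the iterates satisfy f(x_k) - f(x*) ≤ L‖x_0 - x*‖²/(2k) for all k ≥ 1 (sublinear convergence rate of gradient descent). -/
open scoped InnerProductSpace
open Set

variable {E : Type*} [NormedAddCommGroup E] [InnerProductSpace ℝ E] [CompleteSpace E]

lemma line_hasDerivAt (f : E → ℝ) (g : E → E) (hg : ∀ z, HasGradientAt f (g z) z)
    (x y : E) (t : ℝ) :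
    HasDerivAt (fun s : ℝ => f (x + s • (y - x))) ⟪g (x + t • (y - x)), y - x⟫_ℝ t := by
  have hline : HasDerivAt (fun s : ℝ => x + s • (y - x)) (y - x) t := by
    simpa using ((hasDerivAt_id t).smul_const (y - x)).const_add x
  have hf := (hg (x + t • (y - x))).hasFDerivAt
  have := hf.comp_hasDerivAt t hline
  simpa [InnerProductSpace.toDual_apply_apply, Function.comp_def] using this

lemma convex_first_order (f : E → ℝ) (hconv : ConvexOn ℝ Set.univ f)
    (g : E → E) (hg : ∀ z, HasGradientAt f (g z) z) (x y : E) :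
    ⟪g x, y - x⟫_ℝ ≤ f y - f x := by
  set φ : ℝ → ℝ := fun s => f (x + s • (y - x)) with hφ
  have hd : HasDerivAt φ ⟪g x, y - x⟫_ℝ 0 := by
    simpa using line_hasDerivAt f g hg x y 0
  have hslope : Filter.Tendsto (slope φ 0) (nhdsWithin 0 (Ioi 0)) (nhds ⟪g x, y - x⟫_ℝ) :=
    (hasDerivAt_iff_tendsto_slope.1 hd).mono_left
      (nhdsWithin_mono 0 (fun t ht => ne_of_gt ht))
  refine le_of_tendsto hslope ?_
  filter_upwards [Ioo_mem_nhdsGT_of_mem (by norm_num : (0:ℝ) ∈ Ico (0:ℝ) 1)] with t ht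
  have ht0 : 0 < t := ht.1
  have hc := hconv.2 (mem_univ x) (mem_univ y) (by linarith [ht.2] : (0:ℝ) ≤ 1 - t)
      (le_of_lt ht0) (by ring)
  have hxy : (1 - t) • x + t • y = x + t • (y - x) := by
    rw [smul_sub, sub_smul]; module
  rw [hxy] at hc
  have hφt : φ t ≤ f x + t * (f y - f x) := by
    calc φ t ≤ (1 - t) * f x + t * f y := hc
    _ = f x + t * (f y - f x) := by ring
  have hφ0 : φ 0 = f x := by simp [hφ]
  rw [slope_def_field, sub_zero, div_le_iff₀ ht0]
  nlinarith

lemma descent_lemma (f : E → ℝ) (g : E → E) (hg : ∀ z, HasGradientAt f (g z) z)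
    (L : ℝ) (hL : 0 < L) (hLip : ∀ y z, ‖g y - g z‖ ≤ L * ‖y - z‖) (x y : E) :
    f y ≤ f x + ⟪g x, y - x⟫_ℝ + L / 2 * ‖y - x‖ ^ 2 := by
  set ψ : ℝ → ℝ := fun t =>
    f (x + t • (y - x)) - t * ⟪g x, y - x⟫_ℝ - L / 2 * t ^ 2 * ‖y - x‖ ^ 2 with hψ
  have hd : ∀ t : ℝ, HasDerivAt ψ
      (⟪g (x + t • (y - x)), y - x⟫_ℝ - ⟪g x, y - x⟫_ℝ - L * t * ‖y - x‖ ^ 2) t := by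
    intro t
    have h1 := line_hasDerivAt f g hg x y t
    have h2 : HasDerivAt (fun t : ℝ => t * ⟪g x, y - x⟫_ℝ) ⟪g x, y - x⟫_ℝ t := by
      simpa using (hasDerivAt_id t).mul_const _
    have h3 : HasDerivAt (fun t : ℝ => L / 2 * t ^ 2 * ‖y - x‖ ^ 2)
        (L * t * ‖y - x‖ ^ 2) t := by
      have h := ((hasDerivAt_pow 2 t).const_mul (L/2)).mul_const (‖y - x‖ ^ 2)
      refine h.congr_deriv ?_
      ring
    exact (h1.sub h2).sub h3
  have hanti : AntitoneOn ψ (Icc 0 1) := by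
    apply antitoneOn_of_deriv_nonpos (convex_Icc 0 1)
    · exact fun t _ => ((hd t).continuousAt).continuousWithinAt
    · exact fun t _ => ((hd t).differentiableAt).differentiableWithinAt
    · intro t ht
      rw [interior_Icc] at ht
      rw [(hd t).deriv]
      have key : ⟪g (x + t • (y - x)) - g x, y - x⟫_ℝ ≤ L * t * ‖y - x‖ ^ 2 := by
        calc ⟪g (x + t • (y - x)) - g x, y - x⟫_ℝ
            ≤ ‖g (x + t • (y - x)) - g x‖ * ‖y - x‖ := real_inner_le_norm _ _
          _ ≤ (L * ‖(x + t • (y - x)) - x‖) * ‖y - x‖ := by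
              have := hLip (x + t • (y - x)) x
              have hyx : (0:ℝ) ≤ ‖y - x‖ := norm_nonneg _
              nlinarith [norm_nonneg (g (x + t • (y - x)) - g x)]
          _ = L * t * ‖y - x‖ ^ 2 := by
              rw [add_sub_cancel_left, norm_smul, Real.norm_eq_abs,
                abs_of_pos ht.1]
              ring
      have heq : ⟪g (x + t • (y - x)), y - x⟫_ℝ - ⟪g x, y - x⟫_ℝ
          = ⟪g (x + t • (y - x)) - g x, y - x⟫_ℝ := (inner_sub_left _ _ _).symm
      linarith
  have h01 := hanti (left_mem_Icc.2 zero_le_one) (right_mem_Icc.2 zero_le_one) zero_le_one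
  have hψ1 : ψ 1 = f y - ⟪g x, y - x⟫_ℝ - L / 2 * ‖y - x‖ ^ 2 := by
    simp [hψ]
  have hψ0 : ψ 0 = f x := by simp [hψ]
  rw [hψ1, hψ0] at h01
  linarith

/-- Sublinear convergence rate of gradient descent for convex functions with
Lipschitz gradient. -/
theorem gradient_descent_rate {n : ℕ} (f : EuclideanSpace ℝ (Fin n) → ℝ)
    (g : EuclideanSpace ℝ (Fin n) → EuclideanSpace ℝ (Fin n))
    (hconv : ConvexOn ℝ Set.univ f)
    (hgrad : ∀ y, HasGradientAt f (g y) y)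
    (L : ℝ) (hL : 0 < L)
    (hLip : ∀ y z, ‖g y - g z‖ ≤ L * ‖y - z‖)
    (xstar : EuclideanSpace ℝ (Fin n)) (hmin : ∀ y, f xstar ≤ f y)
    (x : ℕ → EuclideanSpace ℝ (Fin n))
    (hiter : ∀ k, x (k + 1) = x k - (1 / L) • g (x k)) :
    ∀ k : ℕ, 1 ≤ k → f (x k) - f xstar ≤ L * ‖x 0 - xstar‖ ^ 2 / (2 * k) := by
  have hL' : L ≠ 0 := ne_of_gt hL
  -- sufficient decrease
  have hdec : ∀ k, f (x (k+1)) ≤ f (x k) - 1/(2*L) * ‖g (x k)‖^2 := by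
    intro k
    have hstep := descent_lemma f g hgrad L hL hLip (x k) (x (k+1))
    have hsub : x (k+1) - x k = -((1/L) • g (x k)) := by rw [hiter k]; abel
    rw [hsub] at hstep
    have hinner : ⟪g (x k), -((1/L) • g (x k))⟫_ℝ = -(1/L * ‖g (x k)‖^2) := by
      rw [inner_neg_right, real_inner_smul_right, real_inner_self_eq_norm_sq]
    have hnorm : ‖-((1/L) • g (x k))‖^2 = (1/L)^2 * ‖g (x k)‖^2 := by
      rw [norm_neg, norm_smul, Real.norm_eq_abs, abs_of_pos (by positivity : (0:ℝ) < 1/L)]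
      ring
    rw [hinner, hnorm] at hstep
    calc f (x (k+1)) ≤ f (x k) + -(1/L * ‖g (x k)‖^2) + L/2 * ((1/L)^2 * ‖g (x k)‖^2) :=
          hstep
      _ = f (x k) - 1/(2*L) * ‖g (x k)‖^2 := by
          field_simp
          ring
  -- per-step bound
  have hper : ∀ k, f (x (k+1)) - f xstar ≤
      L/2 * (‖x k - xstar‖^2 - ‖x (k+1) - xstar‖^2) := by
    intro k
    have hA := convex_first_order f hconv g hgrad (x k) xstar
    have hA' : f (x k) - f xstar ≤ ⟪g (x k), x k - xstar⟫_ℝ := by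
      have : xstar - x k = -(x k - xstar) := by abel
      rw [this, inner_neg_right] at hA
      linarith
    have hexp : ‖x (k+1) - xstar‖^2 =
        ‖x k - xstar‖^2 - 2 * (1/L * ⟪x k - xstar, g (x k)⟫_ℝ)
          + (1/L)^2 * ‖g (x k)‖^2 := by
      have h1 : x (k+1) - xstar = (x k - xstar) - (1/L) • g (x k) := by
        rw [hiter k]; abel
      rw [h1, norm_sub_sq_real, real_inner_smul_right, norm_smul, Real.norm_eq_abs,
        abs_of_pos (by positivity : (0:ℝ) < 1/L)]
      ring
    have hcomm : ⟪x k - xstar, g (x k)⟫_ℝ = ⟪g (x k), x k - xstar⟫_ℝ :=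
      real_inner_comm _ _
    rw [hcomm] at hexp
    have hd := hdec k
    rw [hexp]
    have hid : ∀ I G e : ℝ, L/2 * (e - (e - 2 * (1/L * I) + (1/L)^2 * G))
        = I - 1/(2*L) * G := by
      intro I G e
      field_simp
      ring
    rw [hid]
    linarith [hd, hA']
  -- telescoped bound by induction
  have hkey : ∀ k : ℕ, (k:ℝ) * (f (x k) - f xstar) ≤
      L/2 * (‖x 0 - xstar‖^2 - ‖x k - xstar‖^2) := by
    intro k
    induction k with
    | zero => simp
    | succ k ih =>
      have hmono : f (x (k+1)) ≤ f (x k) := by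
        have h1 := hdec k
        have h2 : (0:ℝ) ≤ 1/(2*L) * ‖g (x k)‖^2 := by positivity
        linarith
      have hp := hper k
      have hknn : (0:ℝ) ≤ (k:ℝ) := Nat.cast_nonneg k
      push_cast
      nlinarith [mul_nonneg hknn (sub_nonneg.2 hmono)]
  intro k hk
  have hkn : 0 < k := hk
  have hk0 : (0:ℝ) < (k:ℝ) := by exact_mod_cast hkn
  have hek : (0:ℝ) ≤ ‖x k - xstar‖^2 := sq_nonneg _
  have h := hkey k
  rw [le_div_iff₀ (by positivity : (0:ℝ) < 2 * (k:ℝ))]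
  nlinarith [mul_nonneg (le_of_lt hL) hek]
end

section
/- The Gaussian process posterior variance is monotonically nonincreasing in the data: adding an additional observation site cannot increase the posterior variance at any point, i.e., σ²_{n+1}(x) ≤ σ²_n(x) for all x, where σ²_n is the posterior variance formula with noise variance τ² > 0. -/
open Matrix

/-- The Gram matrix of a kernel on a finite tuple of sites. -/
noncomputable def gramMatrix {𝒳 : Type*} (k : 𝒳 → 𝒳 → ℝ) {m : ℕ}
    (z : Fin m → 𝒳) : Matrix (Fin m) (Fin m) ℝ :=
  Matrix.of fun i j => k (z i) (z j)

/-- Gaussian process posterior variance at `x` given observation sites `z` and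
noise variance `τ2`. -/
noncomputable def postVar {𝒳 : Type*} (k : 𝒳 → 𝒳 → ℝ) (τ2 : ℝ) {m : ℕ}
    (z : Fin m → 𝒳) (x : 𝒳) : ℝ :=
  k x x - (fun i => k x (z i)) ⬝ᵥ ((gramMatrix k z + τ2 • 1)⁻¹ *ᵥ fun i => k x (z i))

lemma smul_one_posDef {m : ℕ} {τ2 : ℝ} (hτ : 0 < τ2) :
    (τ2 • (1 : Matrix (Fin m) (Fin m) ℝ)).PosDef := by
  rw [Matrix.posDef_iff_dotProduct_mulVec]
  refine ⟨?_, fun v hv => ?_⟩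
  · unfold Matrix.IsHermitian
    ext i j
    simp [Matrix.one_apply, eq_comm]
  · have h1 : (0:ℝ) < star v ⬝ᵥ v := dotProduct_star_self_pos_iff.mpr hv
    have hs : star v = v := by simp
    rw [hs] at h1
    have : v ⬝ᵥ ((τ2 • (1 : Matrix (Fin m) (Fin m) ℝ)) *ᵥ v) = τ2 * (v ⬝ᵥ v) := by
      rw [Matrix.smul_mulVec, Matrix.one_mulVec, dotProduct_smul, smul_eq_mul]
    rw [show star v = v by simp, this]
    exact mul_pos hτ h1

lemma quad_bound {m : ℕ} (M : Matrix (Fin m) (Fin m) ℝ) (hM : M.PosDef)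
    (b w : Fin m → ℝ) :
    2 * (w ⬝ᵥ b) - w ⬝ᵥ (M *ᵥ w) ≤ b ⬝ᵥ (M⁻¹ *ᵥ b) := by
  set u : Fin m → ℝ := M⁻¹ *ᵥ b with hu
  have hdet : IsUnit M.det := hM.det_pos.ne'.isUnit
  have hMu : M *ᵥ u = b := by
    rw [hu, Matrix.mulVec_mulVec, Matrix.mul_nonsing_inv _ hdet, Matrix.one_mulVec]
  have hsym : Mᵀ = M := hM.isHermitian
  have h0 : 0 ≤ (w - u) ⬝ᵥ (M *ᵥ (w - u)) := by
    have := hM.posSemidef.re_dotProduct_nonneg (w - u)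
    simpa using this
  have hexp : (w - u) ⬝ᵥ (M *ᵥ (w - u))
      = w ⬝ᵥ (M *ᵥ w) - w ⬝ᵥ b - u ⬝ᵥ (M *ᵥ w) + u ⬝ᵥ b := by
    simp only [Matrix.mulVec_sub, dotProduct_sub, sub_dotProduct, hMu]
    ring
  have hcross : u ⬝ᵥ (M *ᵥ w) = w ⬝ᵥ b := by
    rw [Matrix.dotProduct_mulVec, ← Matrix.mulVec_transpose, hsym, hMu, dotProduct_comm]
  have hub : u ⬝ᵥ b = b ⬝ᵥ (M⁻¹ *ᵥ b) := dotProduct_comm _ _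
  rw [hexp, hcross, hub] at h0
  linarith

/-- The GP posterior variance is monotonically nonincreasing in the data:
adding one further observation site cannot increase the posterior variance. -/
theorem posterior_variance_antitone {𝒳 : Type*} (k : 𝒳 → 𝒳 → ℝ)
    (hsymm : ∀ x y, k x y = k y x)
    (hpsd : ∀ (m : ℕ) (z : Fin m → 𝒳), (gramMatrix k z).PosSemidef)
    (τ2 : ℝ) (hτ : 0 < τ2) {n : ℕ} (xs : Fin (n + 1) → 𝒳) (x : 𝒳) :
    postVar k τ2 xs x ≤ postVar k τ2 (fun i : Fin n => xs i.castSucc) x := by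
  set zs : Fin n → 𝒳 := fun i => xs i.castSucc with hzs
  set M : Matrix (Fin n) (Fin n) ℝ := gramMatrix k zs + τ2 • 1 with hMdef
  set M' : Matrix (Fin (n+1)) (Fin (n+1)) ℝ := gramMatrix k xs + τ2 • 1 with hM'def
  have hM : M.PosDef := Matrix.PosDef.posSemidef_add (hpsd n zs) (smul_one_posDef hτ)
  have hM' : M'.PosDef := Matrix.PosDef.posSemidef_add (hpsd (n+1) xs) (smul_one_posDef hτ)
  set b : Fin n → ℝ := fun i => k x (zs i) with hbdef
  set b' : Fin (n+1) → ℝ := fun i => k x (xs i) with hb'def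
  -- submatrix relation
  have hsub : M'.submatrix Fin.castSucc Fin.castSucc = M := by
    ext i j
    simp only [hM'def, hMdef, Matrix.submatrix_apply, Matrix.add_apply, gramMatrix,
      Matrix.of_apply, Matrix.smul_apply, Matrix.one_apply, Fin.castSucc_inj, hzs]
  -- the padded optimal weight
  set w : Fin n → ℝ := M⁻¹ *ᵥ b with hw
  set w' : Fin (n+1) → ℝ := Fin.snoc w 0 with hw'
  have hdot1 : w' ⬝ᵥ b' = w ⬝ᵥ b := by
    rw [hw', dotProduct, Fin.sum_univ_castSucc]
    simp [dotProduct, hb'def, hbdef, hzs]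
  have hdot2 : w' ⬝ᵥ (M' *ᵥ w') = w ⬝ᵥ (M *ᵥ w) := by
    rw [← hsub]
    rw [hw', dotProduct, Fin.sum_univ_castSucc]
    simp only [Fin.snoc_castSucc, Fin.snoc_last, zero_mul, add_zero]
    congr 1
    ext i
    congr 1
    rw [Matrix.mulVec, dotProduct, Fin.sum_univ_castSucc]
    simp [Matrix.mulVec, dotProduct, Fin.snoc_castSucc, Fin.snoc_last]
  -- key inequalities
  have hMw : M *ᵥ w = b := by
    rw [hw, Matrix.mulVec_mulVec, Matrix.mul_nonsing_inv _ hM.det_pos.ne'.isUnit, Matrix.one_mulVec]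
  have heq : 2 * (w ⬝ᵥ b) - w ⬝ᵥ (M *ᵥ w) = b ⬝ᵥ (M⁻¹ *ᵥ b) := by
    rw [hMw, dotProduct_comm w b, ← hw]
    ring
  have hineq : b ⬝ᵥ (M⁻¹ *ᵥ b) ≤ b' ⬝ᵥ (M'⁻¹ *ᵥ b') := by
    calc b ⬝ᵥ (M⁻¹ *ᵥ b) = 2 * (w' ⬝ᵥ b') - w' ⬝ᵥ (M' *ᵥ w') := by
          rw [hdot1, hdot2, heq]
      _ ≤ b' ⬝ᵥ (M'⁻¹ *ᵥ b') := quad_bound M' hM' b' w'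
  simp only [postVar, ← hMdef, ← hM'def, ← hzs]
  have hb'e : (fun i => k x (xs i)) = b' := rfl
  have hbe : (fun i => k x (zs i)) = b := rfl
  rw [hb'e, hbe]
  linarith
end
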